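/- arXiv:1004.2483 — 2 statements merged into one kernel-verified Lean document; each statement's English description precedes it below -/
import Mathlib

section
/- Let F be a real (formally real) field of characteristic not 2. If the Pythagoras number p(F) satisfies p(F) > 2^{ℓ-1} for some ℓ ≥ 1, then there exists an anisotropic torsion ℓ-fold Pfister form over F; in particular the torsion part of the ℓ-th power of the fundamental ideal I^ℓ_t F is nonzero and u(F) ≥ 2^ℓ. -/
open scoped BigOperators ENat Classical

namespace QF

variable {F : Type*} [Field F]

/-- Value of the diagonal quadratic form with coefficients `d` at the vector `v`. -/
def qval {ι : Type*} [Fintype ι] (d : ι → F) (v : ι → F) : F :=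
  ∑ i, d i * v i ^ 2

/-- A (diagonal) quadratic form is isotropic if it has a nontrivial zero. -/
def Isotropic {ι : Type*} [Fintype ι] (d : ι → F) : Prop :=
  ∃ v : ι → F, v ≠ 0 ∧ qval d v = 0

def Anisotropic {ι : Type*} [Fintype ι] (d : ι → F) : Prop :=
  ¬ Isotropic d

/-- Orthogonal sum of `n` copies of the form `d`. -/
def copies (n : ℕ) {ι : Type*} (d : ι → F) : Fin n × ι → F :=
  fun p => d p.2

/-- Orthogonal sum of two diagonal forms. -/
def sumForm {ι κ : Type*} (d : ι → F) (e : κ → F) : ι ⊕ κ → F :=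
  Sum.elim d e

/-- A form is weakly isotropic if some multiple `n × q`, `n ≥ 1`, is isotropic. -/
def WeaklyIsotropic {ι : Type*} [Fintype ι] (d : ι → F) : Prop :=
  ∃ n : ℕ, 1 ≤ n ∧ Isotropic (copies n d)

/-- Isometry of diagonal quadratic forms. -/
def Isometric {ι κ : Type*} [Fintype ι] [Fintype κ] (d : ι → F) (e : κ → F) : Prop :=
  ∃ f : (ι → F) ≃ₗ[F] (κ → F), ∀ v, qval e (f v) = qval d v

/-- The hyperbolic form of dimension `2m`, i.e. `m × ⟨1,-1⟩`. -/
def hypForm (F : Type*) [Field F] (m : ℕ) : Fin m ⊕ Fin m → F :=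
  Sum.elim (fun _ => (1 : F)) (fun _ => (-1 : F))

def Hyperbolic {ι : Type*} [Fintype ι] (d : ι → F) : Prop :=
  ∃ m : ℕ, Isometric d (hypForm F m)

/-- A form is torsion if some multiple `n × q`, `n ≥ 1`, is hyperbolic. -/
def Torsion {ι : Type*} [Fintype ι] (d : ι → F) : Prop :=
  ∃ n : ℕ, 1 ≤ n ∧ Hyperbolic (copies n d)

/-- `e` is a subform of `d` : `d ≅ e ⊥ τ` for some form `τ`. -/
def IsSubform {ι κ : Type*} [Fintype ι] [Fintype κ] (e : κ → F) (d : ι → F) : Prop :=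
  ∃ (m : ℕ) (τ : Fin m → F), Isometric d (sumForm e τ)

/-- `e` is similar to a subform of `d`. -/
def SimSubform {ι κ : Type*} [Fintype ι] [Fintype κ] (e : κ → F) (d : ι → F) : Prop :=
  ∃ c : F, c ≠ 0 ∧ IsSubform (fun i => c * e i) d

/-- The `ℓ`-fold Pfister form `⟨⟨a₁,…,a_ℓ⟩⟩ = ⊗ᵢ ⟨1, aᵢ⟩`, with coefficient
`∏ i ∈ S, a i` at the index `S : Finset (Fin ℓ)`. -/
def pfister {ℓ : ℕ} (a : Fin ℓ → F) : Finset (Fin ℓ) → F :=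
  fun S => ∏ i ∈ S, a i

/-- `d` is a Pfister neighbor of the `ℓ`-fold Pfister form `⟨⟨a⟩⟩`. -/
def IsPfisterNeighbor {ι : Type*} [Fintype ι] {ℓ : ℕ} (d : ι → F) (a : Fin ℓ → F) : Prop :=
  2 ^ ℓ < 2 * Fintype.card ι ∧ SimSubform d (pfister a)

/-- Witt equivalence of diagonal forms. -/
def WittEquiv {ι κ : Type*} [Fintype ι] [Fintype κ] (d : ι → F) (e : κ → F) : Prop :=
  ∃ m k : ℕ, Isometric (sumForm d (hypForm F m)) (sumForm e (hypForm F k))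

/-- An ordering of the field `F`, given by its positive cone. -/
structure FieldOrdering (F : Type*) [Field F] where
  P : Set F
  add_mem : ∀ x y : F, x ∈ P → y ∈ P → x + y ∈ P
  mul_mem : ∀ x y : F, x ∈ P → y ∈ P → x * y ∈ P
  total : ∀ x : F, x ∈ P ∨ -x ∈ P
  neg_one_notMem : (-1 : F) ∉ P

/-- The signature of a (nondegenerate diagonal) form at an ordering. -/
noncomputable def sgn {ι : Type*} [Fintype ι] (P : FieldOrdering F) (d : ι → F) : ℤ :=
  ∑ i, if d i ∈ P.P then 1 else -1

/-- The Harrison set `H(a) = {P : a >_P 0}`. -/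
def Harrison (F : Type*) [Field F] (a : F) : Set (FieldOrdering F) :=
  {P | a ∈ P.P ∧ -a ∉ P.P}

/-- The Harrison topology on the space of orderings. -/
instance orderingTopology (F : Type*) [Field F] : TopologicalSpace (FieldOrdering F) :=
  .generateFrom {s | ∃ a : F, a ≠ 0 ∧ s = Harrison F a}

/-- `F` satisfies SAP: every clopen subset of the space of orderings is a Harrison set. -/
def IsSAP (F : Type*) [Field F] : Prop :=
  ∀ s : Set (FieldOrdering F), IsClopen s → ∃ a : F, a ≠ 0 ∧ s = Harrison F a

/-- Totally indefinite: indefinite at every ordering of `F`. -/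
def TotallyIndefinite {ι : Type*} [Fintype ι] (d : ι → F) : Prop :=
  ∀ P : FieldOrdering F, (sgn P d).natAbs < Fintype.card ι

/-- The `u`-invariant: supremum of dimensions of anisotropic torsion forms. -/
noncomputable def uInv (F : Type*) [Field F] : ℕ∞ :=
  sSup {n : ℕ∞ | ∃ (m : ℕ) (d : Fin m → F), Anisotropic d ∧ Torsion d ∧ n = m}

/-- The Hasse number `ũ`: supremum of dimensions of anisotropic totally indefinite forms. -/
noncomputable def hasseNumber (F : Type*) [Field F] : ℕ∞ :=
  sSup {n : ℕ∞ | ∃ (m : ℕ) (d : Fin m → F), (∀ i, d i ≠ 0) ∧ Anisotropic d ∧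
    TotallyIndefinite d ∧ n = m}

/-- `x` is a sum of `m` squares. -/
def IsSumSqOf (m : ℕ) (x : F) : Prop :=
  ∃ f : Fin m → F, x = ∑ i, f i ^ 2

/-- The Pythagoras number of `F`. -/
noncomputable def pythNumber (F : Type*) [Field F] : ℕ∞ :=
  sInf {p : ℕ∞ | ∃ m : ℕ, p = m ∧ ∀ x : F, IsSumSq x → IsSumSqOf m x}

/-- Property `S₁`: for every torsion binary form `β` there is `n ≥ 1` with
`(n × ⟨1⟩) ⊥ β` isotropic. -/
def HasS1 (F : Type*) [Field F] : Prop :=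
  ∀ β : Fin 2 → F, (∀ i, β i ≠ 0) → Torsion β →
    ∃ n : ℕ, 1 ≤ n ∧ Isotropic (sumForm (fun _ : Fin n => (1 : F)) β)

/-- The Pythagorean closure of `F` inside an algebraic closure: the smallest
subfield containing `F` in which every sum of two squares is a square. -/
noncomputable def pythClosure (F : Type*) [Field F] : Subfield (AlgebraicClosure F) :=
  sInf {K | Set.range (algebraMap F (AlgebraicClosure F)) ⊆ K ∧
    ∀ x ∈ K, ∀ y ∈ K, ∃ z ∈ K, z ^ 2 = x ^ 2 + y ^ 2}

/-- The form `d` over `F` becomes isotropic over the Pythagorean closure of `F`. -/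
def IsotropicOverPyth {ι : Type*} [Fintype ι] (d : ι → F) : Prop :=
  ∃ v : ι → AlgebraicClosure F, (∀ i, v i ∈ pythClosure F) ∧ v ≠ 0 ∧
    ∑ i, algebraMap F (AlgebraicClosure F) (d i) * v i ^ 2 = 0

end QF

/-!
Let `s` be a sum of squares that is not a sum of `2^(ℓ-1)` squares, and take
`φ = ⟨⟨-s, 1, …, 1⟩⟩ ≅ 2^(ℓ-1)⟨1⟩ ⊥ 2^(ℓ-1)⟨-s⟩`. Pfister's theorem that `2ᵏ⟨1⟩ ≅ 2ᵏ⟨c⟩` for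
every nonzero sum `c` of `2ᵏ` squares makes such sums closed under multiplication, so an isotropic
vector of `φ` would write `s` as a sum of `2^(ℓ-1)` squares. Conversely `s` is a sum of `2ᴺ`
squares for some `N`, and then `2ᴺ × φ ≅ 2^(N+ℓ-1)⟨1, -s⟩ ≅ 2^(N+ℓ-1)⟨1, -1⟩` is hyperbolic.
-/

namespace QF

theorem sumForm_const {R α β : Type*} (c : R) :
    sumForm (fun _ : α => c) (fun _ : β => c) = fun _ => c := by
  funext p
  rcases p with i | i <;> rfl

variable {F : Type*} [Field F] {ι κ μ ι' κ' : Type*}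
  [Fintype ι] [Fintype κ] [Fintype μ] [Fintype ι'] [Fintype κ']

section Isometric

theorem Isometric.refl (d : ι → F) : Isometric d d :=
  ⟨LinearEquiv.refl F (ι → F), fun _ => rfl⟩

theorem Isometric.symm {d : ι → F} {e : κ → F} (h : Isometric d e) : Isometric e d := by
  obtain ⟨f, hf⟩ := h
  exact ⟨f.symm, fun w => by rw [← hf, f.apply_symm_apply]⟩

theorem Isometric.trans {d : ι → F} {e : κ → F} {g : μ → F}
    (h₁ : Isometric d e) (h₂ : Isometric e g) : Isometric d g := by
  obtain ⟨f₁, hf₁⟩ := h₁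
  obtain ⟨f₂, hf₂⟩ := h₂
  exact ⟨f₁.trans f₂, fun v => by rw [LinearEquiv.trans_apply, hf₂, hf₁]⟩

theorem isometric_comp_equiv (e : ι ≃ κ) (d : κ → F) : Isometric (d ∘ e) d :=
  ⟨LinearEquiv.funCongrLeft F F e.symm, fun v =>
    (Fintype.sum_equiv e _ _ fun i => by simp [LinearEquiv.funCongrLeft_apply]).symm⟩

theorem qval_sumForm (d : ι → F) (e : κ → F) (v : ι ⊕ κ → F) :
    qval (sumForm d e) v = qval d (v ∘ Sum.inl) + qval e (v ∘ Sum.inr) :=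
  Fintype.sum_sum_type _

theorem Isometric.sumForm {d : ι → F} {d' : ι' → F} {e : κ → F} {e' : κ' → F}
    (h₁ : Isometric d d') (h₂ : Isometric e e') :
    Isometric (sumForm d e) (sumForm d' e') := by
  obtain ⟨f, hf⟩ := h₁
  obtain ⟨g, hg⟩ := h₂
  refine ⟨(LinearEquiv.sumArrowLequivProdArrow ι κ F F).trans
    ((f.prodCongr g).trans (LinearEquiv.sumArrowLequivProdArrow ι' κ' F F).symm), fun v => ?_⟩
  rw [qval_sumForm, qval_sumForm, ← hf, ← hg]
  rfl

theorem Isometric.mul_left {d : ι → F} {e : κ → F} (t : F) (h : Isometric d e) :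
    Isometric (fun i => t * d i) (fun j => t * e j) := by
  obtain ⟨f, hf⟩ := h
  refine ⟨f, fun v => ?_⟩
  simp only [qval, mul_assoc, ← Finset.mul_sum] at hf ⊢
  rw [hf]

theorem isometric_sq_mul {t : F} (ht : t ≠ 0) (d : ι → F) :
    Isometric d (fun i => t ^ 2 * d i) := by
  refine ⟨LinearEquiv.smulOfNeZero F _ _ (inv_ne_zero ht), fun v => ?_⟩
  refine Finset.sum_congr rfl fun i _ => ?_
  simp only [LinearEquiv.smulOfNeZero_apply, Pi.smul_apply, smul_eq_mul]
  field_simp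

theorem Isometric.copies {d : ι → F} {e : κ → F} (n : ℕ) (h : Isometric d e) :
    Isometric (copies n d) (copies n e) := by
  obtain ⟨f, hf⟩ := h
  refine ⟨(LinearEquiv.curry F F (Fin n) ι).trans
    ((LinearEquiv.piCongrRight fun _ => f).trans (LinearEquiv.curry F F (Fin n) κ).symm),
    fun v => ?_⟩
  simp only [qval, QF.copies, Fintype.sum_prod_type] at hf ⊢
  exact Finset.sum_congr rfl fun j _ => hf fun i => v (j, i)

theorem isometric_sumForm_copies (n : ℕ) (d : ι → F) (e : κ → F) :
    Isometric (sumForm (copies n d) (copies n e)) (copies n (sumForm d e)) := by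
  convert isometric_comp_equiv (Equiv.prodSumDistrib (Fin n) ι κ).symm (copies n (sumForm d e))
  funext p
  rcases p with p | p <;> rfl

theorem Isometric.isotropic {d : ι → F} {e : κ → F} (h : Isometric d e) (hd : Isotropic d) :
    Isotropic e := by
  obtain ⟨f, hf⟩ := h
  obtain ⟨v, hv, h0⟩ := hd
  exact ⟨f v, (map_ne_zero_iff f f.injective).2 hv, by rw [hf, h0]⟩

theorem Isometric.anisotropic {d : ι → F} {e : κ → F} (h : Isometric d e) (he : Anisotropic e) :
    Anisotropic d :=
  fun hd => he (h.isotropic hd)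

theorem Isometric.hyperbolic {d : ι → F} {e : κ → F} (h : Isometric d e) (he : Hyperbolic e) :
    Hyperbolic d := by
  obtain ⟨m, hm⟩ := he
  exact ⟨m, h.trans hm⟩

theorem Isometric.torsion {d : ι → F} {e : κ → F} (h : Isometric d e) (he : Torsion e) :
    Torsion d := by
  obtain ⟨n, hn, m, hm⟩ := he
  exact ⟨n, hn, (h.copies n).hyperbolic ⟨m, hm⟩⟩

theorem hyperbolic_sumForm_one_neg_one :
    Hyperbolic (sumForm (fun _ : ι => (1 : F)) (fun _ : ι => -1)) := by
  let e := Fintype.equivFin ι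
  refine ⟨Fintype.card ι, ?_⟩
  convert isometric_comp_equiv (e.sumCongr e) (hypForm F _)
  funext p
  rcases p with i | i <;> rfl

/-- The change of variables is `(x, y) ↦ (x + b y, x - a y)`. -/
theorem isometric_sumForm_add_mul (a b : F) (hab : a + b ≠ 0) :
    Isometric (sumForm (fun _ : ι => a + b) (fun _ : ι => a * b * (a + b)))
      (sumForm (fun _ : ι => a) (fun _ : ι => b)) := by
  let f : (ι ⊕ ι → F) →ₗ[F] (ι ⊕ ι → F) :=
    { toFun := fun w => Sum.elim (fun i => w (.inl i) + b * w (.inr i))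
        (fun i => w (.inl i) - a * w (.inr i))
      map_add' := fun x y => by
        funext p
        rcases p with i | i <;> simp only [Pi.add_apply, Sum.elim_inl, Sum.elim_inr] <;> ring
      map_smul' := fun t x => by
        funext p
        rcases p with i | i <;>
          simp only [Pi.smul_apply, smul_eq_mul, RingHom.id_apply, Sum.elim_inl, Sum.elim_inr] <;>
          ring }
  have hf : Function.Injective f := by
    refine (injective_iff_map_eq_zero f).2 fun w hw => ?_
    have hl (i : ι) : w (.inl i) + b * w (.inr i) = 0 := congrFun hw (.inl i)
    have hr (i : ι) : w (.inl i) - a * w (.inr i) = 0 := congrFun hw (.inr i)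
    have h₂ (i : ι) : w (.inr i) = 0 :=
      (mul_eq_zero.1 (by linear_combination hl i - hr i : (a + b) * w (.inr i) = 0)).resolve_left
        hab
    funext p
    rcases p with i | i
    · show w (.inl i) = 0
      linear_combination hr i + a * h₂ i
    · exact h₂ i
  refine ⟨LinearEquiv.ofInjectiveEndo f hf, fun w => ?_⟩
  rw [LinearEquiv.coe_ofInjectiveEndo, qval_sumForm, qval_sumForm]
  simp only [qval, ← Finset.sum_add_distrib]
  refine Finset.sum_congr rfl fun i _ => ?_
  simp only [f, LinearMap.coe_mk, AddHom.coe_mk, Function.comp_apply, Sum.elim_inl, Sum.elim_inr]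
  ring

end Isometric

section SumsOfSquares

theorem isSumSqOf_zero (m : ℕ) : IsSumSqOf m (0 : F) :=
  ⟨0, by simp⟩

theorem isSumSqOf_sum_sq (x : ι → F) : IsSumSqOf (Fintype.card ι) (∑ i, x i ^ 2) :=
  ⟨x ∘ (Fintype.equivFin ι).symm, (Equiv.sum_comp (Fintype.equivFin ι).symm _).symm⟩

theorem IsSumSqOf.add {m n : ℕ} {a b : F} (ha : IsSumSqOf m a) (hb : IsSumSqOf n b) :
    IsSumSqOf (m + n) (a + b) := by
  obtain ⟨f, rfl⟩ := ha
  obtain ⟨g, rfl⟩ := hb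
  exact ⟨Fin.append f g, by simp [Fin.sum_univ_add]⟩

theorem IsSumSqOf.mono {m n : ℕ} {a : F} (ha : IsSumSqOf m a) (h : m ≤ n) : IsSumSqOf n a := by
  simpa [Nat.add_sub_cancel' h] using ha.add (isSumSqOf_zero (n - m))

theorem IsSumSqOf.exists_add {m n : ℕ} {c : F} (h : IsSumSqOf (m + n) c) :
    ∃ a b : F, IsSumSqOf m a ∧ IsSumSqOf n b ∧ c = a + b := by
  obtain ⟨f, rfl⟩ := h
  exact ⟨_, _, ⟨_, rfl⟩, ⟨_, rfl⟩, Fin.sum_univ_add _⟩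

theorem IsSumSqOf.sq_mul {m : ℕ} {a : F} (t : F) (ha : IsSumSqOf m a) :
    IsSumSqOf m (t ^ 2 * a) := by
  obtain ⟨f, rfl⟩ := ha
  exact ⟨fun i => t * f i, by simp only [Finset.mul_sum, mul_pow]⟩

theorem IsSumSq.exists_isSumSqOf {x : F} (h : IsSumSq x) : ∃ N, IsSumSqOf N x := by
  induction h with
  | zero => exact ⟨0, isSumSqOf_zero 0⟩
  | sq_add a _ ih =>
    obtain ⟨N, hN⟩ := ih
    exact ⟨1 + N, IsSumSqOf.add ⟨fun _ => a, by simp [sq]⟩ hN⟩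

theorem eq_zero_of_sum_sq_eq_zero (hreal : ¬ IsSumSq (-1 : F)) {x : ι → F}
    (h : ∑ i, x i ^ 2 = 0) : x = 0 := by
  by_contra! hx
  obtain ⟨j, hj⟩ := Function.ne_iff.1 hx
  apply hreal
  rw [← Finset.add_sum_erase _ _ (Finset.mem_univ j)] at h
  have : ∑ i ∈ Finset.univ.erase j, (x i / x j) ^ 2 = -1 := by
    simp only [div_pow, ← Finset.sum_div, eq_neg_of_add_eq_zero_right h, neg_div,
      div_self (pow_ne_zero 2 hj)]
  exact this ▸ IsSumSq.sum_sq _ _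

end SumsOfSquares

section Roundness

theorem IsSumSqOf.mul_of_isometric {n : ℕ} {a b : F}
    (hb : Isometric (fun _ : Fin n => (1 : F)) (fun _ : Fin n => b)) (ha : IsSumSqOf n a) :
    IsSumSqOf n (a * b) := by
  obtain ⟨g, hg⟩ := hb
  obtain ⟨f, rfl⟩ := ha
  refine ⟨fun i => b * g f i, ?_⟩
  have := hg f
  simp only [qval, one_mul] at this
  rw [← this, Finset.sum_mul, Finset.sum_congr rfl fun i _ => ?_]
  ring

theorem isometric_fin_const_of_isSumSqOf (k : ℕ) {c : F} (hc : c ≠ 0)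
    (h : IsSumSqOf (2 ^ k) c) :
    Isometric (fun _ : Fin (2 ^ k) => (1 : F)) (fun _ : Fin (2 ^ k) => c) := by
  induction k generalizing c with
  | zero =>
    obtain ⟨f, rfl⟩ := h
    have hf : f 0 ≠ 0 := by simpa using hc
    simpa using isometric_sq_mul hf (fun _ : Fin 1 => (1 : F))
  | succ k ih =>
    let e : Fin (2 ^ (k + 1)) ≃ Fin (2 ^ k) ⊕ Fin (2 ^ k) :=
      (finCongr (by ring)).trans finSumFinEquiv.symm
    suffices hsum : Isometric (sumForm (fun _ : Fin (2 ^ k) => (1 : F)) (fun _ => 1))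
        (sumForm (fun _ => c) (fun _ => c)) by
      rw [sumForm_const, sumForm_const] at hsum
      exact (isometric_comp_equiv e _).trans (hsum.trans (isometric_comp_equiv e _).symm)
    obtain ⟨a, b, ha, hb, rfl⟩ := (show IsSumSqOf (2 ^ k + 2 ^ k) c by
      rwa [← two_mul, ← pow_succ']).exists_add
    rcases eq_or_ne a 0 with rfl | ha0
    · rw [zero_add] at hc ⊢
      exact (ih hc hb).sumForm (ih hc hb)
    rcases eq_or_ne b 0 with rfl | hb0
    · rw [add_zero] at hc ⊢
      exact (ih hc ha).sumForm (ih hc ha)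
    have hab : Isometric (fun _ : Fin (2 ^ k) => a * b * (a + b))
        (fun _ : Fin (2 ^ k) => a + b) := by
      have := ih (mul_ne_zero ha0 hb0) (ha.mul_of_isometric (ih hb0 hb))
      simpa [mul_comm] using (this.mul_left (a + b)).symm
    exact ((ih ha0 ha).sumForm (ih hb0 hb)).trans ((isometric_sumForm_add_mul a b hc).symm.trans
      ((Isometric.refl fun _ : Fin (2 ^ k) => a + b).sumForm hab))

theorem isometric_const_of_isSumSqOf {k : ℕ} (hι : Fintype.card ι = 2 ^ k) {c : F} (hc : c ≠ 0)
    (h : IsSumSqOf (2 ^ k) c) : Isometric (fun _ : ι => (1 : F)) (fun _ : ι => c) := by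
  let e := Fintype.equivFinOfCardEq hι
  exact (isometric_comp_equiv e _).trans
    ((isometric_fin_const_of_isSumSqOf k hc h).trans (isometric_comp_equiv e _).symm)

theorem IsSumSqOf.mul_two_pow {k : ℕ} {a b : F} (ha : IsSumSqOf (2 ^ k) a)
    (hb : IsSumSqOf (2 ^ k) b) : IsSumSqOf (2 ^ k) (a * b) := by
  rcases eq_or_ne b 0 with rfl | hb0
  · simpa using isSumSqOf_zero _
  · exact ha.mul_of_isometric (isometric_fin_const_of_isSumSqOf k hb0 hb)

end Roundness

theorem anisotropic_sumForm_one_neg (hreal : ¬ IsSumSq (-1 : F)) {k : ℕ}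
    (hκ : Fintype.card κ = 2 ^ k) {s : F} (hs : ¬ IsSumSqOf (2 ^ k) s) :
    Anisotropic (sumForm (fun _ : κ => (1 : F)) (fun _ : κ => -s)) := by
  rintro ⟨v, hv, h0⟩
  set A := ∑ i, v (.inl i) ^ 2
  set B := ∑ i, v (.inr i) ^ 2
  have hAB : A = s * B := by
    rw [qval_sumForm] at h0
    simp only [qval, Function.comp_apply, one_mul, neg_mul, Finset.sum_neg_distrib,
      ← Finset.mul_sum] at h0
    linear_combination h0
  have hA : IsSumSqOf (2 ^ k) A := hκ ▸ isSumSqOf_sum_sq _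
  have hB : IsSumSqOf (2 ^ k) B := hκ ▸ isSumSqOf_sum_sq _
  rcases eq_or_ne B 0 with hB0 | hB0
  · have hl := eq_zero_of_sum_sq_eq_zero hreal (hAB.trans (by rw [hB0, mul_zero]))
    have hr := eq_zero_of_sum_sq_eq_zero hreal hB0
    refine hv (funext fun p => ?_)
    rcases p with i | i
    exacts [congrFun hl i, congrFun hr i]
  · have hsAB : s = B⁻¹ ^ 2 * (A * B) := by
      rw [hAB]
      field_simp
    exact hs (hsAB ▸ (hA.mul_two_pow hB).sq_mul _)

theorem torsion_sumForm_one_neg {k : ℕ} (hκ : Fintype.card κ = 2 ^ k) {s : F} (hs : IsSumSq s)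
    (hs0 : s ≠ 0) : Torsion (sumForm (fun _ : κ => (1 : F)) (fun _ : κ => -s)) := by
  obtain ⟨N, hN⟩ := IsSumSq.exists_isSumSqOf hs
  have hcard : Fintype.card (Fin (2 ^ N) × κ) = 2 ^ (N + k) := by simp [hκ, pow_add]
  have hN' : IsSumSqOf (2 ^ (N + k)) s :=
    hN.mono (N.lt_two_pow_self.le.trans (Nat.pow_le_pow_right two_pos (N.le_add_right k)))
  have hneg : Isometric (fun _ : Fin (2 ^ N) × κ => -s) (fun _ : Fin (2 ^ N) × κ => -1) := by
    simpa using ((isometric_const_of_isSumSqOf hcard hs0 hN').mul_left (-1)).symm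
  exact ⟨2 ^ N, Nat.one_le_two_pow, (isometric_sumForm_copies _ _ _).symm.hyperbolic
    (((Isometric.refl _).sumForm hneg).hyperbolic hyperbolic_sumForm_one_neg_one)⟩

section Pfister

def sumNotMemEquivFinset {α : Type*} [DecidableEq α] (i : α) :
    {S : Finset α // i ∉ S} ⊕ {S : Finset α // i ∉ S} ≃ Finset α :=
  (Equiv.sumCongr (Equiv.refl _)
    ({ toFun := fun S => ⟨insert i S.1, not_not.2 (Finset.mem_insert_self i S.1)⟩
       invFun := fun S => ⟨S.1.erase i, Finset.notMem_erase i S.1⟩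
       left_inv := fun S => Subtype.ext (Finset.erase_insert S.2)
       right_inv := fun S => Subtype.ext (Finset.insert_erase (not_not.1 S.2)) } :
      {S : Finset α // i ∉ S} ≃ {S : Finset α // ¬i ∉ S})).trans
    (Equiv.sumCompl (i ∉ ·))

theorem card_notMem_finset {α : Type*} [Fintype α] [DecidableEq α] (i : α) :
    Fintype.card {S : Finset α // i ∉ S} = 2 ^ (Fintype.card α - 1) := by
  have h := Fintype.card_congr (sumNotMemEquivFinset i)
  obtain ⟨n, hn⟩ := Nat.exists_eq_add_one.2 (Fintype.card_pos_iff.2 ⟨i⟩)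
  rw [Fintype.card_sum, Fintype.card_finset, hn, pow_succ] at h
  rw [hn, Nat.add_sub_cancel]
  omega

theorem isometric_pfister_update {ℓ : ℕ} (a : Fin ℓ → F) (i : Fin ℓ) (x : F) :
    Isometric (pfister (Function.update a i x))
      (sumForm (fun S : {S : Finset (Fin ℓ) // i ∉ S} => pfister a S)
        (fun S : {S : Finset (Fin ℓ) // i ∉ S} => x * pfister a S)) := by
  have hS (S : {S : Finset (Fin ℓ) // i ∉ S}) : pfister (Function.update a i x) S = pfister a S :=
    Finset.prod_congr rfl fun j hj => Function.update_of_ne (ne_of_mem_of_not_mem hj S.2) _ _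
  have h : pfister (Function.update a i x) ∘ sumNotMemEquivFinset i
      = sumForm (fun S : {S : Finset (Fin ℓ) // i ∉ S} => pfister a S)
        (fun S : {S : Finset (Fin ℓ) // i ∉ S} => x * pfister a S) := by
    funext p
    rcases p with S | S
    · exact hS S
    · show ∏ j ∈ insert i S.1, Function.update a i x j = x * pfister a S
      rw [Finset.prod_insert S.2, Function.update_self, ← hS]
      rfl
  rw [← h]
  exact (isometric_comp_equiv _ _).symm

end Pfister

theorem card_le_uInv {d : ι → F} (ha : Anisotropic d) (ht : Torsion d) :
    (Fintype.card ι : ℕ∞) ≤ uInv F := by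
  let e := (Fintype.equivFin ι).symm
  exact le_sSup ⟨_, d ∘ e, (isometric_comp_equiv e d).anisotropic ha,
    (isometric_comp_equiv e d).torsion ht, rfl⟩

theorem exists_isSumSq_not_isSumSqOf {m : ℕ} (h : (m : ℕ∞) < pythNumber F) :
    ∃ s : F, IsSumSq s ∧ ¬ IsSumSqOf m s := by
  by_contra! hcon
  exact h.not_ge (sInf_le ⟨m, rfl, hcon⟩)

end QF

theorem stmt3_general (F : Type*) [Field F]
    (hreal : ¬ IsSumSq (-1 : F)) (ℓ : ℕ) (hl : 1 ≤ ℓ)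
    (hp : ((2 ^ (ℓ - 1) : ℕ) : ℕ∞) < QF.pythNumber F) :
    (∃ a : Fin ℓ → F, (∀ i, a i ≠ 0) ∧
      QF.Anisotropic (QF.pfister a) ∧ QF.Torsion (QF.pfister a)) ∧
    ((2 ^ ℓ : ℕ) : ℕ∞) ≤ QF.uInv F := by
  obtain ⟨s, hs, hs_not⟩ := QF.exists_isSumSq_not_isSumSqOf hp
  have hs0 : s ≠ 0 := by
    rintro rfl
    exact hs_not (QF.isSumSqOf_zero _)
  let i : Fin ℓ := ⟨0, hl⟩
  let a : Fin ℓ → F := Function.update 1 i (-s)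
  have ha (j : Fin ℓ) : a j ≠ 0 := by
    rcases eq_or_ne j i with rfl | hj <;> simp [a, *]
  have hcard : Fintype.card {S : Finset (Fin ℓ) // i ∉ S} = 2 ^ (ℓ - 1) := by
    simpa using QF.card_notMem_finset i
  have hsplit : QF.Isometric (QF.pfister a)
      (QF.sumForm (fun _ : {S : Finset (Fin ℓ) // i ∉ S} => (1 : F))
        (fun _ : {S : Finset (Fin ℓ) // i ∉ S} => -s)) := by
    simpa [QF.pfister] using QF.isometric_pfister_update 1 i (-s)
  have hA := hsplit.anisotropic (QF.anisotropic_sumForm_one_neg hreal hcard hs_not)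
  have hT := hsplit.torsion (QF.torsion_sumForm_one_neg hcard hs hs0)
  refine ⟨⟨a, ha, hA, hT⟩, ?_⟩
  simpa using QF.card_le_uInv hA hT

/-- If `F` is formally real with `p(F) > 2^(ℓ-1)`, then there is an
anisotropic torsion `ℓ`-fold Pfister form over `F` (so `I^ℓ_t F ≠ 0`) and `u(F) ≥ 2^ℓ`. -/
theorem stmt3 (F : Type*) [Field F] (hchar : (2 : F) ≠ 0)
    (hreal : ¬ IsSumSq (-1 : F)) (ℓ : ℕ) (hl : 1 ≤ ℓ)
    (hp : ((2 ^ (ℓ - 1) : ℕ) : ℕ∞) < QF.pythNumber F) :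
    (∃ a : Fin ℓ → F, (∀ i, a i ≠ 0) ∧
      QF.Anisotropic (QF.pfister a) ∧ QF.Torsion (QF.pfister a)) ∧
    ((2 ^ ℓ : ℕ) : ℕ∞) ≤ QF.uInv F :=
  stmt3_general F hreal ℓ hl hp
end

section
/- Let K be a uniquely ordered formally real field of characteristic not 2. Then F = K((t)) is a SAP field. -/
open scoped BigOperators ENat Classical

/-!
By Artin's theorem, in a formally real field with a single ordering every element is a sum of
squares up to sign. A power series with constant term `1` is a square (substitute into the
binomial series `(1 + X) ^ (1/2)`), so every Laurent series is `t ^ n * c * g ^ 2` with `c ∈ K`;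
hence every element of `K((t))` is `±Σ□` or `t * (±Σ□)`. If `a`, `b` or `a * b` is `±Σ□`, then
one coefficient of `⟨1, a, b, -ab⟩` is minus a sum of squares times another, which yields a zero
of a multiple of the form; otherwise `a, b ∈ t * (±Σ□)` and so `a * b ∈ t ^ 2 * (±Σ□)`.
-/

open PowerSeries

theorem IsSumSq.map {R S : Type*} [Semiring R] [Semiring S] (f : R →+* S) {x : R}
    (hx : IsSumSq x) : IsSumSq (f x) := by
  induction hx with
  | zero => simp
  | sq_add a _ ih => simpa using ih.sq_add (f a)

def IsSignedSumSq {R : Type*} [CommRing R] (x : R) : Prop :=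
  IsSumSq x ∨ IsSumSq (-x)

namespace IsSignedSumSq

variable {R S : Type*} [CommRing R] [CommRing S] {x y : R}

theorem mul (hx : IsSignedSumSq x) (hy : IsSignedSumSq y) : IsSignedSumSq (x * y) := by
  rcases hx with hx | hx <;> rcases hy with hy | hy
  · exact .inl (hx.mul hy)
  · exact .inr (by simpa using hx.mul hy)
  · exact .inr (by simpa using hx.mul hy)
  · exact .inl (by simpa using hx.mul hy)

theorem sq_mul (a : R) (hx : IsSignedSumSq x) : IsSignedSumSq (a ^ 2 * x) :=
  mul (.inl (IsSquare.sq a).isSumSq) hx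

theorem map (f : R →+* S) (hx : IsSignedSumSq x) : IsSignedSumSq (f x) :=
  hx.imp (IsSumSq.map f) fun h => by simpa using h.map f

end IsSignedSumSq

namespace RingPreordering

section CommRing

variable {R : Type*} [CommRing R]

def sumSq (h : ¬ IsSumSq (-1 : R)) : RingPreordering R where
  toSubsemiring := Subsemiring.sumSq R
  mem_of_isSquare' hx := by simpa using hx.isSumSq
  neg_one_notMem' := by simpa using h

@[simp]
theorem mem_sumSq {h : ¬ IsSumSq (-1 : R)} {x : R} : x ∈ sumSq h ↔ IsSumSq x :=
  Subsemiring.mem_sumSq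

theorem exists_le_isMax (P : RingPreordering R) : ∃ O, P ≤ O ∧ IsMax O := by
  refine zorn_le_nonempty_Ici₀ P (fun c _ hc Q hQ => ?_) P le_rfl
  have common : ∀ {x y}, x ∈ ⋃ O ∈ c, (O : Set R) → y ∈ ⋃ O ∈ c, (O : Set R) →
      ∃ O ∈ c, x ∈ O ∧ y ∈ O := by
    simp only [Set.mem_iUnion, SetLike.mem_coe]
    rintro x y ⟨O₁, hO₁, hx⟩ ⟨O₂, hO₂, hy⟩
    rcases hc.total hO₁ hO₂ with h | h
    · exact ⟨O₂, hO₂, h hx, hy⟩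
    · exact ⟨O₁, hO₁, hx, h hy⟩
  refine ⟨mk' (⋃ O ∈ c, (O : Set R)) (fun hx hy => ?_) (fun hx hy => ?_)
    (fun x => Set.mem_biUnion hQ (Q.mul_self_mem x)) ?_, fun O hO => Set.subset_biUnion_of_mem hO⟩
  · obtain ⟨O, hO, hx, hy⟩ := common hx hy
    exact Set.mem_biUnion hO (add_mem hx hy)
  · obtain ⟨O, hO, hx, hy⟩ := common hx hy
    exact Set.mem_biUnion hO (mul_mem hx hy)
  · simp only [Set.mem_iUnion, SetLike.mem_coe, not_exists]
    exact fun O _ => O.neg_one_notMem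

end CommRing

variable {K : Type*} [Field K] (P : RingPreordering K)

def adjoin {a : K} (ha : -a ∉ P) : RingPreordering K :=
  mk' {x | ∃ s ∈ P, ∃ u ∈ P, x = s + a * u}
    (by
      rintro _ _ ⟨s, hs, u, hu, rfl⟩ ⟨s', hs', u', hu', rfl⟩
      exact ⟨s + s', add_mem hs hs', u + u', add_mem hu hu', by ring⟩)
    (by
      rintro _ _ ⟨s, hs, u, hu, rfl⟩ ⟨s', hs', u', hu', rfl⟩
      exact ⟨s * s' + a * a * (u * u'), add_mem (mul_mem hs hs') (mul_mem (P.mul_self_mem a)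
        (mul_mem hu hu')), s * u' + u * s', add_mem (mul_mem hs hu') (mul_mem hu hs'), by ring⟩)
    (fun x => ⟨x * x, P.mul_self_mem x, 0, zero_mem P, by ring⟩)
    (by
      rintro ⟨s, hs, u, hu, he⟩
      rcases eq_or_ne u 0 with rfl | hu0
      · rw [mul_zero, add_zero] at he
        exact P.neg_one_notMem (he ▸ hs)
      · refine ha ?_
        rw [show -a = (1 + s) * u⁻¹ by rw [eq_mul_inv_iff_mul_eq₀ hu0]; linear_combination he]
        exact mul_mem (add_mem (one_mem P) hs) (inv_mem hu))

theorem le_adjoin {a : K} (ha : -a ∉ P) : P ≤ P.adjoin ha :=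
  fun x hx => ⟨x, hx, 0, zero_mem P, by ring⟩

theorem mem_adjoin_self {a : K} (ha : -a ∉ P) : a ∈ P.adjoin ha :=
  ⟨0, zero_mem P, 1, one_mem P, by ring⟩

variable {P} in
theorem mem_or_neg_mem_of_isMax (hP : IsMax P) (a : K) : a ∈ P ∨ -a ∈ P := by
  by_contra! h
  exact h.1 (hP (P.le_adjoin h.2) (P.mem_adjoin_self h.2))

theorem exists_fieldOrdering_le : ∃ O : QF.FieldOrdering K, (P : Set K) ⊆ O.P := by
  obtain ⟨O, hPO, hO⟩ := P.exists_le_isMax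
  exact ⟨⟨O, fun _ _ => add_mem, fun _ _ => mul_mem, mem_or_neg_mem_of_isMax hO,
    O.neg_one_notMem⟩, hPO⟩

end RingPreordering

namespace QF.FieldOrdering

variable {K : Type*} [Field K] (O : FieldOrdering K)

theorem mul_self_mem (x : K) : x * x ∈ O.P :=
  (O.total x).elim (fun h => O.mul_mem _ _ h h) fun h => by simpa using O.mul_mem _ _ h h

theorem eq_zero_of_mem_of_neg_mem {x : K} (h : x ∈ O.P) (h' : -x ∈ O.P) : x = 0 := by
  by_contra hx
  refine O.neg_one_notMem ?_
  rw [show (-1 : K) = x * -x * (x⁻¹ * x⁻¹) by field_simp]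
  exact O.mul_mem _ _ (O.mul_mem _ _ h h') (O.mul_self_mem _)

end QF.FieldOrdering

/-- If neither `c` nor `-c` were a sum of squares, `c` and `-c` would each be positive at some
ordering, and these orderings coincide. -/
theorem isSignedSumSq_of_existsUnique_fieldOrdering {K : Type*} [Field K]
    (hreal : ¬ IsSumSq (-1 : K)) (huniq : ∃! _ : QF.FieldOrdering K, True) (c : K) :
    IsSignedSumSq c := by
  by_contra h
  rw [IsSignedSumSq, not_or] at h
  let T := RingPreordering.sumSq hreal
  have hc : -c ∉ T := RingPreordering.mem_sumSq.not.mpr h.2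
  have hnc : -(-c) ∉ T := RingPreordering.mem_sumSq.not.mpr (by simpa using h.1)
  obtain ⟨O₁, hO₁⟩ := (T.adjoin hc).exists_fieldOrdering_le
  obtain ⟨O₂, hO₂⟩ := (T.adjoin hnc).exists_fieldOrdering_le
  obtain rfl : O₁ = O₂ := huniq.unique trivial trivial
  have hc0 : c = 0 :=
    O₁.eq_zero_of_mem_of_neg_mem (hO₁ (T.mem_adjoin_self hc)) (hO₂ (T.mem_adjoin_self hnc))
  exact h.1 (hc0 ▸ IsSumSq.zero)

namespace PowerSeries

variable {K : Type*} [Field K] [CharZero K]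

theorem exists_sq_eq_of_constantCoeff_eq_one {f : K⟦X⟧} (hf : constantCoeff f = 1) :
    ∃ g, g ^ 2 = f := by
  have hs : HasSubst (f - 1) := HasSubst.of_constantCoeff_zero' (by simp [hf])
  refine ⟨(binomialSeries K (2⁻¹ : ℚ)).subst (f - 1), ?_⟩
  have hsq : binomialSeries K (2⁻¹ : ℚ) ^ 2 = 1 + X := by
    rw [sq, ← binomialSeries_add, show (2⁻¹ + 2⁻¹ : ℚ) = (1 : ℕ) by norm_num, binomialSeries_nat,
      pow_one]
  rw [← subst_pow hs, hsq, subst_add hs, subst_X hs, ← map_one (C (R := K)), subst_C]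
  simp

theorem exists_eq_C_mul_sq {f : K⟦X⟧} (hf : constantCoeff f ≠ 0) :
    ∃ g, f = C (constantCoeff f) * g ^ 2 := by
  obtain ⟨g, hg⟩ := exists_sq_eq_of_constantCoeff_eq_one (f := C (constantCoeff f)⁻¹ * f)
    (by simp [inv_mul_cancel₀ hf])
  exact ⟨g, by rw [hg, ← mul_assoc, ← map_mul, mul_inv_cancel₀ hf, map_one, one_mul]⟩

end PowerSeries

namespace LaurentSeries

theorem isSignedSumSq_or_eq_single_one_mul {K : Type*} [Field K] [CharZero K]
    (hK : ∀ c : K, IsSignedSumSq c) (x : K⸨X⸩) :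
    IsSignedSumSq x ∨ ∃ s : K⸨X⸩, IsSignedSumSq s ∧ x = HahnSeries.single 1 1 * s := by
  rcases eq_or_ne x 0 with rfl | hx
  · exact .inl (.inl .zero)
  have hc : constantCoeff x.powerSeriesPart ≠ 0 := by
    simpa [← coeff_zero_eq_constantCoeff_apply, powerSeriesPart_coeff] using
      HahnSeries.coeff_order_eq_zero.not.mpr hx
  obtain ⟨g, hg⟩ := exists_eq_C_mul_sq hc
  rw [← single_order_mul_powerSeriesPart x, hg, map_mul, map_pow, coe_C]
  obtain ⟨k, hk | hk⟩ := x.order.even_or_odd'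
  all_goals
    have hs := ((hK (constantCoeff x.powerSeriesPart)).map HahnSeries.C).sq_mul
      (HahnSeries.single k 1 * (g : K⸨X⸩))
    have hk2 : (HahnSeries.single (2 * k) (1 : K) : K⸨X⸩) = HahnSeries.single k 1 ^ 2 := by
      rw [sq, HahnSeries.single_mul_single, one_mul, two_mul]
  · left
    rw [hk, hk2]
    convert hs using 1
    ring
  · right
    refine ⟨_, hs, ?_⟩
    have hk1 : (HahnSeries.single (2 * k + 1) (1 : K) : K⸨X⸩) =
        HahnSeries.single 1 1 * HahnSeries.single k 1 ^ 2 := by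
      rw [← hk2, HahnSeries.single_mul_single, one_mul, add_comm]
    rw [hk, hk1]
    ring

end LaurentSeries

theorem IsSumSq.exists_eq_sum_sq {R : Type*} [CommSemiring R] {S : R} (h : IsSumSq S) :
    ∃ (n : ℕ) (s : Fin n → R), S = ∑ k, s k ^ 2 := by
  induction h with
  | zero => exact ⟨0, Fin.elim0, by simp⟩
  | sq_add a _ ih =>
    obtain ⟨n, s, rfl⟩ := ih
    exact ⟨n + 1, Fin.cons a s, by simp [Fin.sum_univ_succ, sq]⟩

namespace QF

variable {F : Type*} [Field F] {ι : Type*} [Fintype ι]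

theorem qval_copies (n : ℕ) (d : ι → F) (v : Fin n × ι → F) :
    qval (copies n d) v = ∑ k, qval d (fun i => v (k, i)) :=
  Fintype.sum_prod_type _

theorem qval_single [DecidableEq ι] (d : ι → F) (i : ι) (x : F) :
    qval d (Pi.single i x) = d i * x ^ 2 := by
  simp [qval, Pi.single_apply]

theorem weaklyIsotropic_of_mul_add_eq_zero {d : ι → F} {i j : ι} {S : F} (hS : IsSumSq S)
    (h : d i * S + d j = 0) : WeaklyIsotropic d := by
  obtain ⟨n, s, rfl⟩ := hS.exists_eq_sum_sq
  let v : Fin (n + 1) → ι → F := Fin.cons (Pi.single j 1) fun k => Pi.single i (s k)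
  refine ⟨n + 1, n.succ_pos, fun p => v p.1 p.2, fun h0 => ?_, ?_⟩
  · simpa [v] using congrFun h0 (0, j)
  · rw [qval_copies, Fin.sum_univ_succ, ← h, add_comm, Finset.mul_sum]
    simp [v, qval_single]

theorem weaklyIsotropic_of_isSignedSumSq {a b : F} (ha : a ≠ 0)
    (h : IsSignedSumSq a ∨ IsSignedSumSq b ∨ IsSignedSumSq (a * b)) :
    WeaklyIsotropic ![1, a, b, -(a * b)] := by
  rcases h with (h | h) | (h | h) | (h | h)
  · exact weaklyIsotropic_of_mul_add_eq_zero (i := 2) (j := 3) h (by simp [mul_comm])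
  · exact weaklyIsotropic_of_mul_add_eq_zero (i := 0) (j := 1) h (by simp)
  · exact weaklyIsotropic_of_mul_add_eq_zero (i := 1) (j := 3) h (by simp)
  · exact weaklyIsotropic_of_mul_add_eq_zero (i := 0) (j := 2) h (by simp)
  · exact weaklyIsotropic_of_mul_add_eq_zero (i := 0) (j := 3) h (by simp)
  · exact weaklyIsotropic_of_mul_add_eq_zero (i := 1) (j := 2)
      (h.mul (IsSquare.sq a⁻¹).isSumSq) (by simp; field_simp; ring)

end QF

theorem stmt14_general (K : Type*) [Field K]
    (hreal : ¬ IsSumSq (-1 : K))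
    (huniq : ∃! P : QF.FieldOrdering K, True) :
    ∀ a b : LaurentSeries K, a ≠ 0 → b ≠ 0 →
      QF.WeaklyIsotropic ![1, a, b, -(a * b)] := by
  intro a b ha _
  have : CharZero K := by
    have := IsSemireal.of_not_isSumSq_neg_one hreal
    infer_instance
  have hK := isSignedSumSq_of_existsUnique_fieldOrdering hreal huniq
  refine QF.weaklyIsotropic_of_isSignedSumSq ha ?_
  rcases LaurentSeries.isSignedSumSq_or_eq_single_one_mul hK a with ha' | ⟨sa, hsa, rfl⟩
  · exact .inl ha'
  rcases LaurentSeries.isSignedSumSq_or_eq_single_one_mul hK b with hb' | ⟨sb, hsb, rfl⟩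
  · exact .inr (.inl hb')
  refine .inr (.inr ?_)
  rw [show HahnSeries.single 1 1 * sa * (HahnSeries.single 1 1 * sb) =
    HahnSeries.single 1 1 ^ 2 * (sa * sb) by ring]
  exact (hsa.mul hsb).sq_mul _

/-- If `K` is a uniquely ordered formally real field, then `F = K((t))`
is SAP: every form `⟨1,a,b,-ab⟩` over `F` is weakly isotropic. -/
theorem stmt14 (K : Type*) [Field K] (hchar : (2 : K) ≠ 0)
    (hreal : ¬ IsSumSq (-1 : K))
    (huniq : ∃! P : QF.FieldOrdering K, True) :
    ∀ a b : LaurentSeries K, a ≠ 0 → b ≠ 0 →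
      QF.WeaklyIsotropic ![1, a, b, -(a * b)] :=
  stmt14_general K hreal huniq
end
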